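/- arXiv:2210.07502 — 2 statements merged into one kernel-verified Lean document; each statement's English description precedes it below -/
import Mathlib

section
/- For any real numbers λ, ε with 0 ≤ λ, 0 < ε or λ > 0 (so λ + ε > 0), λ + ε ≤ 1, and any nonnegative reals S, B, T with λ·S ≤ B, (λ+ε)·S > B, S ≤ T, and B > 0, we have (1/(λ+ε) − 1)·(B − (λ+ε)) ≥ (1 − λ)·S − 1 − T²·ε/B − 2 + 1, i.e., (1/(λ+ε) − 1)·(B − (λ+ε)) ≥ (1 − λ)·S − T²·ε/B − 2. -/
/-! With `μ = l + e`, the loss `(1 - l) S - (B / μ - B)` equals `(1 - μ) (l S - B) / μ + e S / μ`.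
The first term is `≤ 0` since `l S ≤ B`, and `e S / μ ≤ e S² / B ≤ T² e / B` since `B < μ S`;
expanding `(1 / μ - 1) (B - μ) = B / μ - B - 1 + μ`, the constant `-1 + μ ≥ -2` is slack. -/

lemma one_sub_mul_le_div_sub_add_div {l e S B : ℝ} (hμ : 0 < l + e) (hμ1 : l + e ≤ 1)
    (hlS : l * S ≤ B) :
    (1 - l) * S ≤ B / (l + e) - B + e * S / (l + e) := by
  have key : (1 - l) * S - e * S / (l + e) = (1 - (l + e)) * (l * S) / (l + e) := by
    field_simp
    ring
  have hB : B / (l + e) - B = (1 - (l + e)) * B / (l + e) := by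
    field_simp
  have : (1 - (l + e)) * (l * S) / (l + e) ≤ (1 - (l + e)) * B / (l + e) := by
    gcongr
  linarith

lemma mul_div_le_sq_mul_div {m e S B T : ℝ} (hm : 0 < m) (he : 0 ≤ e) (hS : 0 ≤ S)
    (hST : S ≤ T) (hB : 0 < B) (hBS : B < m * S) :
    e * S / m ≤ T ^ 2 * e / B := by
  rw [div_le_div_iff₀ hm hB]
  have hS2 : S ^ 2 ≤ T ^ 2 := pow_le_pow_left₀ hS hST 2
  calc e * S * B ≤ e * S * (m * S) := by gcongr
    _ = m * e * S ^ 2 := by ring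
    _ ≤ m * e * T ^ 2 := by gcongr
    _ = T ^ 2 * e * m := by ring

theorem stmt_1_general (l e S B T : ℝ) (he : 0 ≤ e) (hle0 : 0 < l + e)
    (hle1 : l + e ≤ 1) (hS : 0 ≤ S) (hB : 0 < B)
    (h1 : l * S ≤ B) (h2 : (l + e) * S > B) (hST : S ≤ T) :
    (1 / (l + e) - 1) * (B - (l + e)) ≥ (1 - l) * S - T ^ 2 * e / B - 2 := by
  have hloss := one_sub_mul_le_div_sub_add_div hle0 hle1 h1
  have hgap := mul_div_le_sq_mul_div hle0 he hS hST hB h2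
  have hexpand : (1 / (l + e) - 1) * (B - (l + e)) = B / (l + e) - B - 1 + (l + e) := by
    field_simp
    ring
  rw [hexpand]
  linarith

theorem stmt_1 (l e S B T : ℝ) (hl : 0 ≤ l) (he : 0 ≤ e) (hle0 : 0 < l + e)
    (hle1 : l + e ≤ 1) (hS : 0 ≤ S) (hT : 0 ≤ T) (hB : 0 < B)
    (h1 : l * S ≤ B) (h2 : (l + e) * S > B) (hST : S ≤ T) :
    (1 / (l + e) - 1) * (B - (l + e)) ≥ (1 - l) * S - T ^ 2 * e / B - 2 :=
  stmt_1_general l e S B T he hle0 hle1 hS hB h1 h2 hST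
end

section
/- Consider T rounds with values v_t ∈ [0,1] and highest competing bids d_t ≥ 0, a budget B with 0 < B ≤ T, and for a shading multiplier λ ∈ [0,1] define the greedy budget-constrained outcome: the player bids min(λ·v_t, remaining budget), wins round t if her bid exceeds d_t, pays her bid when winning, and gains value v_t; let Û(λ) be her total value minus total payment. Let 𝒯 be the set of rounds where the player using λ wins while bidding exactly λ·v_t (not budget-constrained). Then Û(λ) ≤ Σ_{t∈𝒯} (1−λ)·v_t + 1. -/
open scoped Classical

/-- One round of the greedy budget-constrained bidder with shading multiplier `lam`:
state is (remaining budget, accumulated utility); the bid is `min (lam * v t)`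
(remaining budget); the player wins iff her bid strictly exceeds `d t`, paying her
bid and gaining value `v t`. -/
noncomputable def auctionStep (v d : ℕ → ℝ) (lam : ℝ) (s : ℝ × ℝ) (t : ℕ) : ℝ × ℝ :=
  if d t < min (lam * v t) s.1 then
    (s.1 - min (lam * v t) s.1, s.2 + (v t - min (lam * v t) s.1))
  else s

/-- State (remaining budget, utility) after the first `t` rounds, starting with budget `B`. -/
noncomputable def auctionState (v d : ℕ → ℝ) (B lam : ℝ) (t : ℕ) : ℝ × ℝ :=
  (List.range t).foldl (auctionStep v d lam) (B, 0)

/-- `Û(lam)`: total utility of the greedy budget-constrained bidder over `T` rounds. -/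
noncomputable def Uhat (T : ℕ) (v d : ℕ → ℝ) (B lam : ℝ) : ℝ :=
  (auctionState v d B lam T).2

/-!
A win at the full bid `lam * v t` earns exactly `(1 - lam) * v t`. A win at a bid capped by
the remaining budget earns at most `v t ≤ 1` and spends the whole budget, after which nothing
can be won since `d t ≥ 0`. Hence the utility minus the indicator of an exhausted budget is
bounded by the sum of the uncapped gains.
-/

section

variable {v d : ℕ → ℝ} {lam : ℝ}

lemma auctionState_zero (B : ℝ) : auctionState v d B lam 0 = (B, 0) := rfl

lemma auctionState_succ (B : ℝ) (t : ℕ) :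
    auctionState v d B lam (t + 1) = auctionStep v d lam (auctionState v d B lam t) t := by
  simp [auctionState, List.range_succ]

lemma auctionStep_snd_le (s : ℝ × ℝ) {t : ℕ} (hv : v t ≤ 1) (hd : 0 ≤ d t) :
    (auctionStep v d lam s t).2 ≤ s.2
      + (if lam * v t ≤ s.1 ∧ d t < lam * v t then (1 - lam) * v t else 0)
      + (if (auctionStep v d lam s t).1 = 0 then 1 else 0) - (if s.1 = 0 then 1 else 0) := by
  have hnonneg : ∀ x : ℝ, (0 : ℝ) ≤ if x = 0 then 1 else 0 := fun x => by split_ifs <;> norm_num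
  unfold auctionStep
  by_cases hwin : d t < min (lam * v t) s.1
  · have hs : s.1 ≠ 0 := by linarith [min_le_right (lam * v t) s.1]
    rw [if_pos hwin, if_neg hs]
    by_cases hfull : lam * v t ≤ s.1
    · rw [min_eq_left hfull] at hwin ⊢
      rw [if_pos ⟨hfull, hwin⟩]
      linarith [hnonneg (s.1 - lam * v t)]
    · rw [min_eq_right (le_of_not_ge hfull), if_neg (fun h => hfull h.1)]
      simp only [sub_self, if_true]
      linarith [min_le_right (lam * v t) s.1]
  · have hlose : ¬ (lam * v t ≤ s.1 ∧ d t < lam * v t) := fun h =>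
      hwin (by rw [min_eq_left h.1]; exact h.2)
    simp only [if_neg hwin, if_neg hlose]
    linarith

lemma auctionState_snd_le (B : ℝ) (T : ℕ) (hv : ∀ t, v t ≤ 1) (hd : ∀ t, 0 ≤ d t) :
    (auctionState v d B lam T).2 ≤
      (∑ t ∈ Finset.range T,
        if lam * v t ≤ (auctionState v d B lam t).1 ∧ d t < lam * v t
        then (1 - lam) * v t else 0)
      + (if (auctionState v d B lam T).1 = 0 then 1 else 0) := by
  induction T with
  | zero => split_ifs <;> simp [auctionState_zero]
  | succ T ih =>
    rw [Finset.sum_range_succ, auctionState_succ]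
    linarith [auctionStep_snd_le (lam := lam) (auctionState v d B lam T) (hv T) (hd T)]

end

theorem stmt_4_general (T : ℕ) (v d : ℕ → ℝ) (B lam : ℝ)
    (hv : ∀ t, v t ∈ Set.Icc (0 : ℝ) 1) (hd : ∀ t, 0 ≤ d t) :
    Uhat T v d B lam ≤
      (∑ t ∈ (Finset.range T).filter
        (fun t => lam * v t ≤ (auctionState v d B lam t).1 ∧ d t < lam * v t),
        (1 - lam) * v t) + 1 := by
  have hexhausted : (if (auctionState v d B lam T).1 = 0 then (1 : ℝ) else 0) ≤ 1 := by
    split_ifs <;> norm_num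
  rw [Uhat, Finset.sum_filter]
  linarith [auctionState_snd_le (lam := lam) B T (fun t => (hv t).2) hd]

theorem stmt_4 (T : ℕ) (v d : ℕ → ℝ) (B lam : ℝ)
    (hv : ∀ t, v t ∈ Set.Icc (0 : ℝ) 1) (hd : ∀ t, 0 ≤ d t)
    (hB : 0 < B) (hBT : B ≤ T) (hlam : lam ∈ Set.Icc (0 : ℝ) 1) :
    Uhat T v d B lam ≤
      (∑ t ∈ (Finset.range T).filter
        (fun t => lam * v t ≤ (auctionState v d B lam t).1 ∧ d t < lam * v t),
        (1 - lam) * v t) + 1 :=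
  stmt_4_general T v d B lam hv hd
end
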